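/- arXiv:1603.09042 — 7 statements merged into one kernel-verified Lean document; each statement's English description precedes it below -/
import Mathlib

section
/- Let B be a Bézout domain in which every nonzero prime ideal is maximal. Then for all nonzero elements a, b ∈ B, the following are equivalent: (i) there exists a positive integer n such that a^n ∈ bB (i.e., a lies in the radical of the ideal bB); (ii) for every x ∈ B, if a and x are coprime then b and x are coprime. -/
/-!
If every prime containing `b` is maximal, the radical of `bB` is the intersection of the maximal
ideals containing `b`. An element `a` outside such a maximal ideal `P` is coprime to some `x ∈ P`,
and `b` cannot be coprime to that `x` since both lie in `P`. Conversely, any divisor of a power of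
`a` inherits every coprimality of `a`.
-/

theorem Ideal.IsMaximal.exists_mem_isCoprime_of_notMem {R : Type*} [CommRing R] {P : Ideal R}
    (hP : P.IsMaximal) {a : R} (ha : a ∉ P) : ∃ x ∈ P, IsCoprime a x := by
  obtain ⟨z, x, hxP, hzx⟩ := hP.exists_inv ha
  exact ⟨x, hxP, z, 1, by linear_combination hzx⟩

theorem mem_radical_span_singleton_of_forall_isCoprime {R : Type*} [CommRing R] {a b : R}
    (hmax : ∀ P : Ideal R, P.IsPrime → b ∈ P → P.IsMaximal)
    (h : ∀ x : R, IsCoprime a x → IsCoprime b x) : a ∈ (Ideal.span {b}).radical := by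
  rw [Ideal.radical_eq_sInf, Ideal.mem_sInf]
  rintro P ⟨hbP, hP⟩
  have hbP : b ∈ P := hbP (Ideal.mem_span_singleton_self b)
  by_contra haP
  obtain ⟨x, hxP, hax⟩ := (hmax P hP hbP).exists_mem_isCoprime_of_notMem haP
  exact Ideal.IsPrime.notMem_of_isCoprime_of_mem (h x hax) hbP hxP

theorem stmt_0_general (B : Type*) [CommRing B]
    (hmax : ∀ P : Ideal B, P.IsPrime → P ≠ ⊥ → P.IsMaximal)
    (a b : B) (hb : b ≠ 0) :
    (∃ n : ℕ, 0 < n ∧ a ^ n ∈ Ideal.span {b}) ↔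
      (∀ x : B, IsCoprime a x → IsCoprime b x) := by
  constructor
  · rintro ⟨n, -, han⟩ x hax
    exact hax.pow_left.of_isCoprime_of_dvd_left (Ideal.mem_span_singleton.mp han)
  · intro h
    have hmax' : ∀ P : Ideal B, P.IsPrime → b ∈ P → P.IsMaximal := fun P hP hbP ↦
      hmax P hP ((Submodule.ne_bot_iff P).mpr ⟨b, hbP, hb⟩)
    obtain ⟨n, han⟩ := mem_radical_span_singleton_of_forall_isCoprime hmax' h
    exact ⟨n + 1, n.succ_pos, pow_succ' a n ▸ Ideal.mul_mem_left _ a han⟩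

/-- Let `B` be a Bézout domain in which every nonzero prime ideal is maximal. For all
nonzero `a b : B`, `a` lies in the radical of `bB` iff every `x` coprime to `a` is
coprime to `b`. -/
theorem stmt_0 (B : Type*) [CommRing B] [IsDomain B] [IsBezout B]
    (hmax : ∀ P : Ideal B, P.IsPrime → P ≠ ⊥ → P.IsMaximal)
    (a b : B) (ha : a ≠ 0) (hb : b ≠ 0) :
    (∃ n : ℕ, 0 < n ∧ a ^ n ∈ Ideal.span {b}) ↔
      (∀ x : B, IsCoprime a x → IsCoprime b x) :=
  stmt_0_general B hmax a b hb
end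

section
/- Let B be a commutative integral domain such that every element of B has a square root in B (for every r ∈ B there exists s ∈ B with s^2 = r). Then for every nonzero prime ideal P of B, the maximal ideal of the localization B_P is not a principal ideal. -/
/-!
Square roots of elements of `B` give square roots in `B_P`, since a square root of a
denominator outside `P` again lies outside `P`. If the maximal ideal `𝔪` of `B_P` were
generated by `π`, write `π = s ^ 2`; then `s ∈ 𝔪` as `𝔪` is prime, so `s = a π` and
`π (1 - a ^ 2 π) = 0`. As `1 - a ^ 2 π` is a unit, `π = 0`, so `𝔪 = 0`, contradicting `P ≠ 0`.
-/

open IsLocalRing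

theorem IsLocalRing.eq_zero_of_maximalIdeal_eq_span_of_sq_eq {R : Type*} [CommRing R]
    [IsLocalRing R] {π s : R} (hπ : maximalIdeal R = Ideal.span {π}) (hs : s ^ 2 = π) :
    π = 0 := by
  have hπm : π ∈ maximalIdeal R := hπ ▸ Ideal.mem_span_singleton_self π
  have hsm : s ∈ maximalIdeal R :=
    (maximalIdeal.isMaximal R).isPrime.mem_of_pow_mem 2 (hs ▸ hπm)
  obtain ⟨a, rfl⟩ := Ideal.mem_span_singleton'.mp (hπ ▸ hsm)
  have hunit : IsUnit (1 - a ^ 2 * π) :=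
    isUnit_one_sub_self_of_mem_nonunits _ (Ideal.mul_mem_left _ _ hπm)
  have hπ_mul : π * (1 - a ^ 2 * π) = 0 := by linear_combination -hs
  exact hunit.mul_left_eq_zero.mp hπ_mul

theorem IsLocalization.AtPrime.exists_sq_eq {R S : Type*} [CommRing R] [CommRing S]
    [Algebra R S] (P : Ideal R) [P.IsPrime] [IsLocalization.AtPrime S P]
    (hsq : ∀ r : R, ∃ s : R, s ^ 2 = r) (x : S) : ∃ y : S, y ^ 2 = x := by
  obtain ⟨⟨r, u⟩, rfl⟩ := IsLocalization.mk'_surjective P.primeCompl x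
  obtain ⟨s, rfl⟩ := hsq r
  obtain ⟨t, ht⟩ := hsq u
  have htP : t ∈ P.primeCompl := fun htP ↦ u.2 (ht ▸ P.pow_mem_of_mem htP 2 two_pos)
  refine ⟨IsLocalization.mk' S s ⟨t, htP⟩, ?_⟩
  rw [← IsLocalization.mk'_pow]
  congr
  exact Subtype.ext ht

/-- If every element of a domain `B` has a square root in `B`, then for every nonzero
prime ideal `P` of `B` the maximal ideal of the localization `B_P` is not principal. -/
theorem stmt_4 (B : Type*) [CommRing B] [IsDomain B]
    (hsq : ∀ r : B, ∃ s : B, s ^ 2 = r)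
    (P : Ideal B) [P.IsPrime] (hP : P ≠ ⊥) :
    ¬(IsLocalRing.maximalIdeal (Localization.AtPrime P)).IsPrincipal := by
  rintro ⟨π, hπ⟩
  rw [Ideal.submodule_span_eq] at hπ
  obtain ⟨s, hs⟩ := IsLocalization.AtPrime.exists_sq_eq P hsq π
  have hπ0 := eq_zero_of_maximalIdeal_eq_span_of_sq_eq hπ hs
  rw [hπ0, Ideal.span_singleton_eq_bot.mpr rfl,
    ← IsLocalization.AtPrime.map_eq_maximalIdeal P,
    Ideal.map_eq_bot_iff_of_injective (FaithfulSMul.algebraMap_injective B _)] at hπ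
  exact hP hπ
end

section
/- Let 𝔸 be the ring of algebraic integers. Then for every maximal ideal P of 𝔸, the residue field 𝔸/P is infinite. -/
/-!
Every monic nonconstant polynomial over `𝔸` has a root in `𝔸`: it has one in the algebraically
closed field `ℚ̄`, and that root is integral over `𝔸`, hence over `ℤ`. Reducing modulo `P`,
every monic polynomial over `𝔸 ⧸ P` lifts to a monic one of the same degree over `𝔸`, so the
field `𝔸 ⧸ P` is algebraically closed, and algebraically closed fields are infinite.
-/

open Polynomial

theorem integralClosure.exists_isRoot_of_monic {R K : Type*} [CommRing R] [Field K] [IsAlgClosed K]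
    [Algebra R K] {q : (integralClosure R K)[X]} (hq : q.Monic) (hdeg : q.degree ≠ 0) :
    ∃ x, q.IsRoot x := by
  obtain ⟨x, hx⟩ := IsAlgClosed.exists_root (q.map (algebraMap _ K)) (by rwa [hq.degree_map])
  have hx_aeval : aeval x q = 0 := by rwa [← eval_map_algebraMap]
  have hx_integral : IsIntegral R x := isIntegral_trans x ⟨q, hq, hx_aeval⟩
  refine ⟨⟨x, hx_integral⟩, Subtype.val_injective ?_⟩
  change algebraMap (integralClosure R K) K _ = algebraMap (integralClosure R K) K 0
  rwa [map_zero, ← aeval_algebraMap_apply_eq_algebraMap_eval]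

theorem IsAlgClosed.of_surjective_of_exists_isRoot {R K : Type*} [CommRing R] [Field K]
    (f : R →+* K) (hf : Function.Surjective f)
    (h : ∀ q : R[X], q.Monic → q.degree ≠ 0 → ∃ x, q.IsRoot x) : IsAlgClosed K := by
  refine IsAlgClosed.of_exists_root K fun p hmonic hirr => ?_
  obtain ⟨q, rfl, hdeg, hq⟩ := lifts_and_degree_eq_and_monic (map_surjective f hf p) hmonic
  obtain ⟨x, hx⟩ := h q hq (hdeg ▸ (degree_pos_of_irreducible hirr).ne')
  exact ⟨f x, by rw [eval_map, eval₂_hom, hx.eq_zero, map_zero]⟩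

/-- For every maximal ideal `P` of the ring `𝔸` of algebraic integers (the integral
closure of `ℤ` in an algebraic closure of `ℚ`), the residue field `𝔸 ⧸ P` is infinite. -/
theorem stmt_8 (P : Ideal (integralClosure ℤ (AlgebraicClosure ℚ))) (hP : P.IsMaximal) :
    Infinite ((integralClosure ℤ (AlgebraicClosure ℚ)) ⧸ P) := by
  let := Ideal.Quotient.field P
  have : IsAlgClosed (integralClosure ℤ (AlgebraicClosure ℚ) ⧸ P) :=
    .of_surjective_of_exists_isRoot _ Ideal.Quotient.mk_surjective
      fun _ hq hdeg => integralClosure.exists_isRoot_of_monic hq hdeg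
  infer_instance
end

section
/- The ring 𝔸 of algebraic integers is a Bézout domain: every finitely generated ideal of 𝔸 is principal. -/
/-!
A finitely generated ideal `I` of `𝔸` is extended from an ideal `J` of the ring of integers of
a number field `K`. If `h` is the class number of `K`, then `J ^ h = (α)`, and `α = γ ^ h` for
some `γ ∈ 𝔸`, so `I ^ h = (γ ^ h)`. Since `𝔸` is integrally closed, `y ^ n ∣ x ^ n` implies
`y ∣ x`, and this forces `I = (γ)`.
-/

open NumberField
open scoped nonZeroDivisors

namespace Ideal

section IntegrallyClosed

variable {R : Type*} [CommRing R] [IsDomain R] [IsIntegrallyClosed R]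

theorem le_span_singleton_of_pow_le {I : Ideal R} {y : R} {n : ℕ} (hn : n ≠ 0)
    (h : I ^ n ≤ span {y ^ n}) : I ≤ span {y} := fun _ hx =>
  mem_span_singleton.mpr <| (IsIntegrallyClosed.pow_dvd_pow_iff hn).mp <|
    mem_span_singleton.mp (h (pow_mem_pow hx n))

theorem eq_span_singleton_of_pow_eq {I : Ideal R} {y : R} {n : ℕ} (hn : n ≠ 0)
    (h : I ^ n = span {y ^ n}) : I = span {y} := by
  refine le_antisymm (le_span_singleton_of_pow_le hn h.le) ?_
  rcases eq_or_ne y 0 with rfl | hy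
  · simp
  have hn' : n - 1 + 1 = n := Nat.sub_add_cancel (Nat.one_le_iff_ne_zero.mpr hn)
  -- `y ^ n ∈ I * I ^ (n - 1) ⊆ y ^ (n - 1) * I`, and `y ^ (n - 1)` cancels.
  have hpred : I ^ (n - 1) ≤ span {y ^ (n - 1)} := by
    refine le_span_singleton_of_pow_le hn ?_
    rw [← pow_mul, mul_comm, pow_mul, h, span_singleton_pow, ← pow_mul, ← pow_mul, mul_comm]
  have hyn : y ^ (n - 1) * y ∈ span {y ^ (n - 1)} * I := by
    have hIn : I ^ n ≤ span {y ^ (n - 1)} * I := by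
      rw [← hn', pow_succ]
      exact mul_mono_left hpred
    rw [← pow_succ, hn']
    exact hIn (h ▸ mem_span_singleton_self _)
  obtain ⟨z, hz, hyz⟩ := mem_span_singleton_mul.mp hyn
  rwa [span_singleton_le_iff_mem, ← mul_left_cancel₀ (pow_ne_zero _ hy) hyz]

theorem IsPrincipal.of_isPrincipal_pow {I : Ideal R} {n : ℕ} (hn : n ≠ 0)
    (hroot : ∀ a : R, ∃ b, b ^ n = a) (h : (I ^ n).IsPrincipal) : I.IsPrincipal := by
  obtain ⟨a, ha⟩ := h
  obtain ⟨b, rfl⟩ := hroot a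
  exact ⟨b, eq_span_singleton_of_pow_eq hn ha⟩

end IntegrallyClosed

theorem isPrincipal_pow_card_classGroup {A : Type*} [CommRing A] [IsDedekindDomain A]
    [Fintype (ClassGroup A)] (J : Ideal A) : (J ^ Fintype.card (ClassGroup A)).IsPrincipal := by
  rcases eq_or_ne J ⊥ with rfl | hJ
  · rw [bot_pow Fintype.card_ne_zero]
    exact bot_isPrincipal
  have hJ0 : J ∈ (Ideal A)⁰ := mem_nonZeroDivisors_of_ne_zero hJ
  rw [← ClassGroup.mk0_eq_one_iff (pow_mem hJ0 _)]
  calc ClassGroup.mk0 ⟨J ^ _, _⟩ = ClassGroup.mk0 ⟨J, hJ0⟩ ^ Fintype.card (ClassGroup A) := by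
        rw [← map_pow, SubmonoidClass.mk_pow]
    _ = 1 := pow_card_eq_one

end Ideal

namespace integralClosure

section

variable {R L : Type*} [CommRing R] [Field L] [Algebra R L]

instance : IsIntegrallyClosed (integralClosure R L) :=
  IsIntegrallyClosed.of_isIntegrallyClosed_of_isIntegrallyClosedIn
    (R := integralClosure R L) (S := L)

theorem exists_pow_eq [IsAlgClosed L] {n : ℕ} (hn : n ≠ 0) (a : integralClosure R L) :
    ∃ b : integralClosure R L, b ^ n = a := by
  obtain ⟨b, hb⟩ := IsAlgClosed.exists_pow_nat_eq (a : L) (Nat.pos_of_ne_zero hn)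
  exact ⟨⟨b, IsIntegral.of_pow (Nat.pos_of_ne_zero hn) (hb ▸ a.2)⟩, Subtype.ext hb⟩

end

variable {L : Type*} [Field L] [CharZero L]

theorem exists_numberField_subset_range {s : Set (integralClosure ℤ L)} (hs : s.Finite) :
    ∃ (K : IntermediateField ℚ L) (_ : NumberField K) (f : 𝓞 K →+* integralClosure ℤ L),
      s ⊆ Set.range f := by
  set K := IntermediateField.adjoin ℚ (((↑) : integralClosure ℤ L → L) '' s)
  have : Finite (((↑) : integralClosure ℤ L → L) '' s) := (hs.image _).to_subtype
  have : FiniteDimensional ℚ K := IntermediateField.finiteDimensional_adjoin <| by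
    rintro _ ⟨x, -, rfl⟩
    exact x.2.tower_top
  refine ⟨K, {}, ((algebraMap K L).comp (algebraMap (𝓞 K) K)).codRestrict (integralClosure ℤ L)
    fun x => map_isIntegral_int (algebraMap K L) x.isIntegral_coe, fun x hx => ?_⟩
  have hxK : (x : L) ∈ K := IntermediateField.subset_adjoin ℚ _ ⟨x, hx, rfl⟩
  exact ⟨⟨⟨x, hxK⟩, (isIntegral_algebraMap_iff (algebraMap K L).injective).mp x.2⟩, rfl⟩

open Ideal in
instance isBezout_int [IsAlgClosed L] : IsBezout (integralClosure ℤ L) := by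
  refine ⟨fun I ⟨s, hs⟩ => ?_⟩
  obtain ⟨K, _, f, hsf⟩ := exists_numberField_subset_range s.finite_toSet
  have hI : I = (span (f ⁻¹' s)).map f := by
    rw [map_span, Set.image_preimage_eq_of_subset hsf, hs]
  have hh : Fintype.card (ClassGroup (𝓞 K)) ≠ 0 := Fintype.card_ne_zero
  refine IsPrincipal.of_isPrincipal_pow hh (exists_pow_eq hh) ?_
  rw [hI, ← Ideal.map_pow]
  exact (isPrincipal_pow_card_classGroup _).map_ringHom f

end integralClosure

set_option synthInstance.maxHeartbeats 400000 in
/-- The ring `𝔸` of algebraic integers (the integral closure of `ℤ` in an algebraic closure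
of `ℚ`) is a Bézout domain: every finitely generated ideal is principal. -/
theorem stmt_10 (I : Ideal (integralClosure ℤ (AlgebraicClosure ℚ))) (hI : I.FG) :
    I.IsPrincipal :=
  (integralClosure.isBezout_int (L := AlgebraicClosure ℚ)).isPrincipal_of_FG I hI
end

section
/- For every nonzero prime ideal P of the ring 𝔸 of algebraic integers, the maximal ideal of the localization 𝔸_P is not finitely generated. -/
/-!
In `𝔸` every element is a square, and a square root of an element of a prime ideal `P` lies in
`P` again; hence `P = P²`, and so the maximal ideal `𝔪 = P 𝔸_P` of the local domain `𝔸_P`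
satisfies `𝔪 = 𝔪²`. By Nakayama's lemma a finitely generated idempotent ideal of a domain is
`0` or the unit ideal, while `𝔪` is neither because `P ≠ 0`.
-/

theorem integralClosure.exists_pow_eq_s11 {R K : Type*} [CommRing R] [Field K] [IsAlgClosed K]
    [Algebra R K] (x : integralClosure R K) {n : ℕ} (hn : 0 < n) :
    ∃ z : integralClosure R K, z ^ n = x := by
  obtain ⟨z, hz⟩ := IsAlgClosed.exists_pow_nat_eq (x : K) hn
  have hz_int : IsIntegral R z := IsIntegral.of_pow hn (hz ▸ x.2)
  exact ⟨⟨z, hz_int⟩, Subtype.ext hz⟩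

theorem Ideal.IsPrime.isIdempotentElem_of_forall_isSquare {R : Type*} [CommRing R]
    {P : Ideal R} (hP : P.IsPrime) (hsq : ∀ x : R, IsSquare x) : IsIdempotentElem P := by
  refine le_antisymm Ideal.mul_le_right fun x hx => ?_
  obtain ⟨z, rfl⟩ := hsq x
  have hz : z ∈ P := (hP.mem_or_mem hx).elim id id
  exact Ideal.mul_mem_mul hz hz

theorem Localization.AtPrime.maximalIdeal_ne_bot {R : Type*} [CommRing R] [IsDomain R]
    {P : Ideal R} [P.IsPrime] (hP : P ≠ ⊥) :
    IsLocalRing.maximalIdeal (Localization.AtPrime P) ≠ ⊥ := by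
  intro hbot
  apply hP
  rw [← Localization.AtPrime.under_maximalIdeal (I := P), hbot]
  exact Ideal.comap_bot_of_injective _
    (IsLocalization.injective (Localization.AtPrime P) P.primeCompl_le_nonZeroDivisors)

theorem Localization.AtPrime.maximalIdeal_not_fg_of_forall_isSquare {R : Type*} [CommRing R]
    [IsDomain R] (hsq : ∀ x : R, IsSquare x) {P : Ideal R} [hPrime : P.IsPrime] (hP : P ≠ ⊥) :
    ¬(IsLocalRing.maximalIdeal (Localization.AtPrime P)).FG := by
  intro hfg
  have hidem : IsIdempotentElem (IsLocalRing.maximalIdeal (Localization.AtPrime P)) := by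
    rw [← Localization.AtPrime.map_eq_maximalIdeal, IsIdempotentElem, ← Ideal.map_mul,
      (hPrime.isIdempotentElem_of_forall_isSquare hsq).eq]
  rcases (Ideal.isIdempotentElem_iff_eq_bot_or_top _ hfg).mp hidem with hbot | htop
  · exact Localization.AtPrime.maximalIdeal_ne_bot hP hbot
  · exact (IsLocalRing.maximalIdeal.isMaximal _).ne_top htop

/-- For every nonzero prime ideal `P` of the ring `𝔸` of algebraic integers, the maximal
ideal of the localization `𝔸_P` is not finitely generated. -/
theorem stmt_11 (P : Ideal (integralClosure ℤ (AlgebraicClosure ℚ)))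
    [P.IsPrime] (h0 : P ≠ ⊥) :
    ¬(IsLocalRing.maximalIdeal (Localization.AtPrime P)).FG := by
  refine Localization.AtPrime.maximalIdeal_not_fg_of_forall_isSquare (fun x => ?_) h0
  obtain ⟨z, hz⟩ := integralClosure.exists_pow_eq_s11 x two_pos
  exact ⟨z, by rw [← hz, sq]⟩
end

section
/- Let p be a prime and let B be the integral closure of the polynomial ring 𝔽_p[t] in an algebraic closure of the rational function field 𝔽_p(t). Then for every maximal ideal P of B, the residue field B/P is infinite. -/
/-! The constants `𝔽̄_p` are integral over `𝔽_p`, hence over `𝔽_p[t]`, so the algebraic closure of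
`𝔽_p` embeds into `B`. Composed with `B → B ⧸ P` it stays injective, being a ring map out of a field
into a nonzero ring, and an algebraically closed field is infinite. -/

noncomputable def AlgebraicClosure.toIntegralClosure (k A L : Type*) [Field k] [CommRing A]
    [Field L] [IsAlgClosed L] [Algebra k A] [Algebra A L] [Algebra k L] [IsScalarTower k A L] :
    AlgebraicClosure k →+* integralClosure A L :=
  let ι : AlgebraicClosure k →ₐ[k] L := IsAlgClosed.lift
  ι.toRingHom.codRestrict (integralClosure A L).toSubring fun x =>
    ((Algebra.IsIntegral.isIntegral (R := k) x).map ι).tower_top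

theorem infinite_quotient_integralClosure (k : Type*) {A L : Type*} [Field k] [CommRing A]
    [Field L] [IsAlgClosed L] [Algebra k A] [Algebra A L] [Algebra k L] [IsScalarTower k A L]
    {I : Ideal (integralClosure A L)} (hI : I ≠ ⊤) :
    Infinite (integralClosure A L ⧸ I) :=
  have : Nontrivial (integralClosure A L ⧸ I) := Ideal.Quotient.nontrivial_iff.mpr hI
  Infinite.of_injective _
    ((Ideal.Quotient.mk I).comp (AlgebraicClosure.toIntegralClosure k A L)).injective

/-- Let `p` be a prime and `B` the integral closure of `𝔽_p[t]` in an algebraic closure of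
`𝔽_p(t)`. For every maximal ideal `P` of `B`, the residue field `B ⧸ P` is infinite. -/
theorem stmt_14 (p : ℕ) [Fact p.Prime]
    (P : Ideal (integralClosure (Polynomial (ZMod p))
      (AlgebraicClosure (RatFunc (ZMod p))))) (hP : P.IsMaximal) :
    Infinite ((integralClosure (Polynomial (ZMod p))
      (AlgebraicClosure (RatFunc (ZMod p)))) ⧸ P) :=
  infinite_quotient_integralClosure (ZMod p) hP.ne_top
end

section
/- Let B be a Prüfer domain (every nonzero finitely generated ideal of B is invertible as a fractional ideal) such that: (a) for every b ∈ B and every positive integer n there exists d ∈ B with d^n = b; and (b) for all a, b ∈ B, not both zero, there exists a positive integer n such that the n-th power of the ideal aB + bB is a principal ideal. Then B is a Bézout domain: every ideal of the form aB + bB is principal. -/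
/-!
Let `I = (a, b)` with `I ^ n = (c)` and write `c = d ^ n`, so `I ^ n = J ^ n` for `J = (d)`.
Put `S = ∑_{i<n} I^i J^(n-1-i)`. Since addition of ideals is idempotent, both `I S` and `J S`
equal `∑_{i≤n} I^i J^(n-i)`: the missing extreme term `J^n = I^n` is already contained in each.
As `S` is finitely generated and nonzero, it is invertible, and cancelling it gives `I = J`.
-/

open Finset
open scoped nonZeroDivisors

theorem mul_sum_pow_mul_pow_eq_of_pow_eq {α : Type*} [IdemCommSemiring α] {a b : α} {n : ℕ}
    (hn : n ≠ 0) (h : a ^ n = b ^ n) :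
    a * ∑ i ∈ range n, a ^ i * b ^ (n - 1 - i) = b * ∑ i ∈ range n, a ^ i * b ^ (n - 1 - i) := by
  set S := ∑ i ∈ range n, a ^ i * b ^ (n - 1 - i)
  have hS : ∀ i ∈ range n, a ^ i * b ^ (n - 1 - i) ≤ S := fun i hi =>
    single_le_sum (f := fun i => a ^ i * b ^ (n - 1 - i)) (fun _ _ => zero_le) hi
  have hn1 : n - 1 + 1 = n := Nat.sub_add_cancel (Nat.one_le_iff_ne_zero.mpr hn)
  have haS : a * S + b ^ n = ∑ i ∈ range (n + 1), a ^ i * b ^ (n - i) := by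
    rw [sum_range_succ', mul_sum, pow_zero, one_mul, Nat.sub_zero]
    congr 1
    refine sum_congr rfl fun i _ => ?_
    rw [← mul_assoc, ← pow_succ', Nat.sub_sub, add_comm 1 i]
  have hbS : b * S + a ^ n = ∑ i ∈ range (n + 1), a ^ i * b ^ (n - i) := by
    rw [sum_range_succ, mul_sum, Nat.sub_self, pow_zero, mul_one]
    congr 1
    refine sum_congr rfl fun i hi => ?_
    rw [mul_left_comm, ← pow_succ', Nat.sub_right_comm, Nat.sub_add_cancel]
    have := mem_range.mp hi; omega
  have hbn : b ^ n ≤ a * S := by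
    calc b ^ n = a * (a ^ (n - 1) * b ^ (n - 1 - (n - 1))) := by
          rw [Nat.sub_self, pow_zero, mul_one, ← pow_succ', hn1, h]
      _ ≤ a * S := by gcongr; exact hS _ (mem_range.mpr (by omega))
  have han : a ^ n ≤ b * S := by
    calc a ^ n = b * (a ^ 0 * b ^ (n - 1 - 0)) := by
          rw [pow_zero, one_mul, Nat.sub_zero, ← pow_succ', hn1, h]
      _ ≤ b * S := by gcongr; exact hS _ (mem_range.mpr (by omega))
  rw [← hbn.add_eq_left, ← han.add_eq_left, haS, hbS]

theorem Ideal.eq_of_fg_of_pow_eq_pow {R : Type*} [CommRing R] [IsDomain R]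
    (hinv : ∀ I : Ideal R, I.FG → I ≠ ⊥ → IsUnit (I : FractionalIdeal R⁰ (FractionRing R)))
    {I J : Ideal R} (hI : I.FG) (hJ : J.FG) {n : ℕ} (hn : n ≠ 0) (h : I ^ n = J ^ n) :
    I = J := by
  rcases eq_or_ne J ⊥ with rfl | hJ0
  · rwa [← Ideal.zero_eq_bot, zero_pow hn, pow_eq_zero_iff hn] at h
  set S := ∑ i ∈ range n, I ^ i * J ^ (n - 1 - i)
  have hSfg : S.FG :=
    sum_induction _ Submodule.FG (fun _ _ => Submodule.FG.sup) Submodule.fg_bot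
      fun i _ => hI.pow.mul hJ.pow
  have hS0 : S ≠ ⊥ := by
    refine ne_bot_of_le_ne_bot (pow_ne_zero (n - 1) hJ0) ?_
    simpa only [pow_zero, one_mul, Nat.sub_zero] using
      single_le_sum (f := fun i => I ^ i * J ^ (n - 1 - i)) (fun _ _ => zero_le)
        (mem_range.mpr (Nat.pos_of_ne_zero hn))
  have hIS : (I : FractionalIdeal R⁰ (FractionRing R)) * S = J * S := by
    rw [← FractionalIdeal.coeIdeal_mul, ← FractionalIdeal.coeIdeal_mul,
      mul_sum_pow_mul_pow_eq_of_pow_eq hn h]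
  exact FractionalIdeal.coeIdeal_injective ((hinv S hSfg hS0).mul_right_cancel hIS)

/-- Let `B` be a Prüfer domain (every nonzero finitely generated ideal is invertible as a
fractional ideal) such that (a) every element of `B` has an `n`-th root for every positive
`n`, and (b) for all `a b` not both zero, some positive power of the ideal `aB + bB` is
principal. Then every ideal `aB + bB` is principal. -/
theorem stmt_15 (B : Type*) [CommRing B] [IsDomain B]
    (hpruf : ∀ I : Ideal B, I.FG → I ≠ ⊥ →
      IsUnit ((I : FractionalIdeal (nonZeroDivisors B) (FractionRing B))))
    (hroot : ∀ b : B, ∀ n : ℕ, 0 < n → ∃ d : B, d ^ n = b)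
    (hpow : ∀ a b : B, ¬(a = 0 ∧ b = 0) →
      ∃ n : ℕ, 0 < n ∧ ((Ideal.span {a, b} : Ideal B) ^ n).IsPrincipal) :
    ∀ a b : B, (Ideal.span {a, b} : Ideal B).IsPrincipal := by
  intro a b
  by_cases h0 : a = 0 ∧ b = 0
  · obtain ⟨rfl, rfl⟩ := h0
    simpa using bot_isPrincipal
  obtain ⟨n, hn, c, hc⟩ := hpow a b h0
  obtain ⟨d, rfl⟩ := hroot c n hn
  refine ⟨d, Ideal.eq_of_fg_of_pow_eq_pow hpruf (Submodule.fg_span (Set.toFinite _))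
    (Submodule.fg_span_singleton d) hn.ne' ?_⟩
  rw [hc, Ideal.submodule_span_eq, Ideal.span_singleton_pow]
end
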